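/- arXiv:1308.2620 — 5 statements merged into one kernel-verified Lean document; each statement's English description precedes it below -/
import Mathlib

section
/- Let f : ℝⁿ → ℝ be twice continuously differentiable on a convex box I, and suppose |∂²f/∂uᵢ∂uⱼ(u)| < Mᵢⱼ for all u ∈ I and all i, j. Define the diagonal matrix Q̄ with Q̄ᵢᵢ = Σⱼ Mᵢⱼ. Then for any u, v ∈ I, f(v) − f(u) ≤ ∇f(u)ᵀ(v − u) + ½ (v − u)ᵀ Q̄ (v − u). -/
/-!
Along the segment `t ↦ u + t (v - u)` the function `g t = f (u + t (v - u))` has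
`g'' t = f''(u + t (v - u)) (v - u) (v - u)`, so it suffices to bound this quadratic form by
`∑ i, (∑ j, M i j) (v i - u i)²` and integrate twice. Expanding the form in coordinates, each
term is at most `(M i j (v i - u i)² + M j i (v j - u j)²) / 2` by `2|ab| ≤ a² + b²`, once we know
that the mixed partials are symmetric, so that `|∂ᵢ∂ⱼ f|` is below both `M i j` and `M j i`.
Symmetry holds on the box even when it has empty interior, because only coordinates in which
`u` and `v` differ matter, and the box is nondegenerate in those.
-/

open Set Finset

theorem Convex.second_derivative_symmetric_of_slice {E F : Type*} [NormedAddCommGroup E]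
    [NormedSpace ℝ E] [NormedAddCommGroup F] [NormedSpace ℝ F] {s : Set E} {f : E → F}
    {f' : E → E →L[ℝ] F} {f'' : E →L[ℝ] E →L[ℝ] F} {w x y : E} (hs : Convex ℝ s) (hw : w ∈ s)
    (hslice : (interior {p : ℝ × ℝ | w + p.1 • x + p.2 • y ∈ s}).Nonempty)
    (hf : ∀ z ∈ s, HasFDerivAt f (f' z) z) (hf' : HasFDerivAt f' f'' w) :
    f'' x y = f'' y x := by
  set L : ℝ × ℝ →L[ℝ] E :=
    (ContinuousLinearMap.fst ℝ ℝ ℝ).smulRight x + (ContinuousLinearMap.snd ℝ ℝ ℝ).smulRight y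
  have hL : ∀ p : ℝ × ℝ, L p = p.1 • x + p.2 • y := fun p => rfl
  have ht_eq : {p : ℝ × ℝ | w + p.1 • x + p.2 • y ∈ s} = L ⁻¹' ((w + ·) ⁻¹' s) := by
    ext p; simp [hL, add_assoc]
  rw [ht_eq] at hslice
  have ht : Convex ℝ (L ⁻¹' ((w + ·) ⁻¹' s)) :=
    (hs.translate_preimage_right w).linear_preimage L.toLinearMap
  have hψ : ∀ p, HasFDerivAt (fun q => w + L q) L p := fun p => L.hasFDerivAt.const_add w
  have hsymm := ht.second_derivative_within_at_symmetric hslice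
    (f := fun p => f (w + L p)) (f' := fun p => (f' (w + L p)).comp L)
    (fun p hp => (hf (w + L p) (interior_subset (s := L ⁻¹' _) hp)).comp p (hψ p))
    (x := 0) (by simpa using hw)
    (((ContinuousLinearMap.compL ℝ (ℝ × ℝ) E F).flip L).hasFDerivAt.comp 0
      ((by simpa using hf' : HasFDerivAt f' f'' (w + L 0)).comp 0 (hψ 0))).hasFDerivWithinAt
    (1, 0) (0, 1)
  simpa [hL] using hsymm

theorem second_partial_symm_of_mem_Icc {ι : Type*} [Fintype ι] [DecidableEq ι]
    {a b w : ι → ℝ} {f : (ι → ℝ) → ℝ} {f' : (ι → ℝ) → (ι → ℝ) →L[ℝ] ℝ}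
    {f'' : (ι → ℝ) →L[ℝ] (ι → ℝ) →L[ℝ] ℝ} (hw : w ∈ Icc a b)
    (hf : ∀ z ∈ Icc a b, HasFDerivAt f (f' z) z) (hf' : HasFDerivAt f' f'' w)
    {i j : ι} (hi : a i < b i) (hj : a j < b j) :
    f'' (Pi.single i 1) (Pi.single j 1) = f'' (Pi.single j 1) (Pi.single i 1) := by
  rcases eq_or_ne i j with rfl | hij
  · rfl
  refine (convex_Icc a b).second_derivative_symmetric_of_slice hw ?_ hf hf'
  have hopen : IsOpen (Ioo (a i - w i) (b i - w i) ×ˢ Ioo (a j - w j) (b j - w j)) :=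
    isOpen_Ioo.prod isOpen_Ioo
  refine ((Set.nonempty_Ioo.2 (by linarith)).prod (Set.nonempty_Ioo.2 (by linarith))).mono
    (hopen.subset_interior_iff.2 ?_)
  rintro ⟨p, q⟩ ⟨⟨hp₁, hp₂⟩, ⟨hq₁, hq₂⟩⟩
  rw [← pi_univ_Icc] at hw
  simp only [Set.mem_ofPred_eq, ← pi_univ_Icc, mem_univ_pi, Set.mem_Icc] at hw hp₁ hp₂ hq₁ hq₂ ⊢
  intro k
  obtain ⟨hwk₁, hwk₂⟩ := hw k
  simp only [Pi.add_apply, Pi.smul_apply, Pi.single_apply, smul_eq_mul]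
  split_ifs <;> subst_vars <;> first | exact (hij rfl).elim | constructor <;> linarith

theorem ContinuousLinearMap.apply_apply_eq_sum_single {ι : Type*} [Fintype ι] [DecidableEq ι]
    (B : (ι → ℝ) →L[ℝ] (ι → ℝ) →L[ℝ] ℝ) (x y : ι → ℝ) :
    B x y = ∑ i, ∑ j, x i * y j * B (Pi.single i 1) (Pi.single j 1) := by
  conv_lhs => rw [pi_eq_sum_univ' x, pi_eq_sum_univ' y]
  simp only [map_sum, map_smul, _root_.sum_apply, smul_apply, smul_eq_mul, mul_sum]
  rw [sum_comm]
  simp only [mul_assoc, mul_left_comm]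

theorem mul_mul_le_of_abs_le {a b h m m' : ℝ} (hm : |h| ≤ m) (hm' : |h| ≤ m') :
    a * b * h ≤ (m * a ^ 2 + m' * b ^ 2) / 2 := by
  have habs : a * b * h ≤ |a| * |b| * |h| := by
    rw [← abs_mul, ← abs_mul]
    exact le_abs_self _
  nlinarith [sq_nonneg (|a| - |b|), sq_abs a, sq_abs b, abs_nonneg h,
    mul_le_mul_of_nonneg_right hm (sq_nonneg a), mul_le_mul_of_nonneg_right hm' (sq_nonneg b)]

theorem sum_mul_mul_le_sum_rowSum_mul_sq {ι : Type*} [Fintype ι] {H M : ι → ι → ℝ} {a : ι → ℝ}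
    (hHM : ∀ i j, |H i j| ≤ M i j) (hsymm : ∀ i j, a i ≠ 0 → a j ≠ 0 → H i j = H j i) :
    ∑ i, ∑ j, a i * a j * H i j ≤ ∑ i, (∑ j, M i j) * a i ^ 2 := by
  -- `|H i j| ≤ M j i` by symmetry: this is what leaves only row sums of `M` on the right.
  have hterm : ∀ i j, a i * a j * H i j ≤ (M i j * a i ^ 2 + M j i * a j ^ 2) / 2 := by
    intro i j
    by_cases hij : a i = 0 ∨ a j = 0
    · have := (abs_nonneg _).trans (hHM i j)
      have := (abs_nonneg _).trans (hHM j i)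
      rw [mul_eq_zero.2 hij, zero_mul]
      positivity
    · rw [not_or] at hij
      exact mul_mul_le_of_abs_le (hHM i j) (hsymm i j hij.1 hij.2 ▸ hHM j i)
  calc ∑ i, ∑ j, a i * a j * H i j
      ≤ ∑ i, ∑ j, (M i j * a i ^ 2 + M j i * a j ^ 2) / 2 :=
        sum_le_sum fun i _ => sum_le_sum fun j _ => hterm i j
    _ = ∑ i, (∑ j, M i j) * a i ^ 2 := by
        simp only [add_div, sum_add_distrib]
        rw [sum_comm (f := fun i j => M j i * a j ^ 2 / 2), ← sum_add_distrib]
        refine sum_congr rfl fun i _ => ?_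
        rw [sum_mul, ← sum_add_distrib]
        exact sum_congr rfl fun j _ => by ring

theorem ContinuousLinearMap.apply_self_le_sum_rowSum_mul_sq {ι : Type*} [Fintype ι]
    [DecidableEq ι] {B : (ι → ℝ) →L[ℝ] (ι → ℝ) →L[ℝ] ℝ} {M : ι → ι → ℝ} {x : ι → ℝ}
    (hBM : ∀ i j, |B (Pi.single i 1) (Pi.single j 1)| ≤ M i j)
    (hsymm : ∀ i j, x i ≠ 0 → x j ≠ 0 →
      B (Pi.single i 1) (Pi.single j 1) = B (Pi.single j 1) (Pi.single i 1)) :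
    B x x ≤ ∑ i, (∑ j, M i j) * x i ^ 2 := by
  rw [B.apply_apply_eq_sum_single]
  exact sum_mul_mul_le_sum_rowSum_mul_sq hBM hsymm

theorem sub_le_deriv_add_half_of_deriv_deriv_le {g g' g'' : ℝ → ℝ} {B : ℝ}
    (hg : ∀ t ∈ Icc (0 : ℝ) 1, HasDerivAt g (g' t) t)
    (hg' : ∀ t ∈ Icc (0 : ℝ) 1, HasDerivAt g' (g'' t) t)
    (hB : ∀ t ∈ Icc (0 : ℝ) 1, g'' t ≤ B) :
    g 1 - g 0 ≤ g' 0 + B / 2 := by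
  have hslope : ∀ t ∈ Icc (0 : ℝ) 1, g' t - g' 0 ≤ B * t := by
    intro t ht
    simpa using (convex_Icc (0 : ℝ) 1).image_sub_le_mul_sub_of_deriv_le
      (fun s hs => (hg' s hs).continuousAt.continuousWithinAt)
      (fun s hs => (hg' s (interior_subset hs)).differentiableAt.differentiableWithinAt)
      (fun s hs => (hg' s (interior_subset hs)).deriv ▸ hB s (interior_subset hs))
      0 (left_mem_Icc.2 zero_le_one) t ht ht.1
  set φ : ℝ → ℝ := fun t => g t - t * g' 0 - B / 2 * t ^ 2
  have hφ : ∀ t ∈ Icc (0 : ℝ) 1, HasDerivAt φ (g' t - g' 0 - B * t) t := by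
    intro t ht
    refine (((hg t ht).sub (hasDerivAt_mul_const (g' 0))).sub
      ((hasDerivAt_pow 2 t).const_mul (B / 2))).congr_deriv ?_
    norm_num
    ring
  have := (convex_Icc (0 : ℝ) 1).image_sub_le_mul_sub_of_deriv_le (C := 0)
      (fun s hs => (hφ s hs).continuousAt.continuousWithinAt)
      (fun s hs => (hφ s (interior_subset hs)).differentiableAt.differentiableWithinAt)
      (fun s hs => by
        rw [(hφ s (interior_subset hs)).deriv]
        linarith [hslope s (interior_subset hs)])
      0 (left_mem_Icc.2 zero_le_one) 1 (right_mem_Icc.2 zero_le_one) zero_le_one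
  simp only [φ] at this
  linarith

theorem quadratic_upper_bound_general {n : ℕ} (uL uU : Fin n → ℝ)
    (f : (Fin n → ℝ) → ℝ) (f' : (Fin n → ℝ) → (Fin n → ℝ) →L[ℝ] ℝ)
    (f'' : (Fin n → ℝ) → (Fin n → ℝ) →L[ℝ] (Fin n → ℝ) →L[ℝ] ℝ)
    (M : Fin n → Fin n → ℝ)
    (hdiff : ∀ u : Fin n → ℝ, (∀ i, uL i ≤ u i ∧ u i ≤ uU i) → HasFDerivAt f (f' u) u)
    (hdiff2 : ∀ u : Fin n → ℝ, (∀ i, uL i ≤ u i ∧ u i ≤ uU i) → HasFDerivAt f' (f'' u) u)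
    (hbound : ∀ u : Fin n → ℝ, (∀ i, uL i ≤ u i ∧ u i ≤ uU i) →
      ∀ i j, |f'' u (Pi.single i 1) (Pi.single j 1)| < M i j)
    (u v : Fin n → ℝ)
    (hu : ∀ i, uL i ≤ u i ∧ u i ≤ uU i) (hv : ∀ i, uL i ≤ v i ∧ v i ≤ uU i) :
    f v - f u ≤ f' u (v - u) + (1/2) * ∑ i, (∑ j, M i j) * (v i - u i)^2 := by
  have hbox : ∀ z : Fin n → ℝ, (∀ i, uL i ≤ z i ∧ z i ≤ uU i) ↔ z ∈ Icc uL uU := fun z => by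
    simp only [← pi_univ_Icc, mem_univ_pi, Set.mem_Icc]
  have hactive : ∀ i, (v - u) i ≠ 0 → uL i < uU i := fun i hi =>
    (le_min (hu i).1 (hv i).1).trans_lt <|
      (min_lt_max.2 (sub_ne_zero.1 hi).symm).trans_le (max_le (hu i).2 (hv i).2)
  simp only [hbox] at hdiff hdiff2 hbound hu hv
  set γ : ℝ → Fin n → ℝ := fun t => u + t • (v - u)
  have hγ : ∀ t ∈ Icc (0 : ℝ) 1, γ t ∈ Icc uL uU := fun t ht =>
    (convex_Icc uL uU).add_smul_sub_mem hu hv ht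
  have hγ' : ∀ t, HasDerivAt γ (v - u) t := fun t => by
    simpa [γ] using ((hasDerivAt_id t).smul_const (v - u)).const_add u
  have hHess : ∀ t ∈ Icc (0 : ℝ) 1,
      f'' (γ t) (v - u) (v - u) ≤ ∑ i, (∑ j, M i j) * (v - u) i ^ 2 := fun t ht =>
    (f'' (γ t)).apply_self_le_sum_rowSum_mul_sq (fun i j => (hbound _ (hγ t ht) i j).le)
      fun i j hi hj => second_partial_symm_of_mem_Icc (hγ t ht) hdiff (hdiff2 _ (hγ t ht))
        (hactive i hi) (hactive j hj)
  have htaylor := sub_le_deriv_add_half_of_deriv_deriv_le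
    (fun t ht => (hdiff _ (hγ t ht)).comp_hasDerivAt t (hγ' t))
    (fun t ht => ((ContinuousLinearMap.apply ℝ ℝ (v - u)).hasFDerivAt).comp_hasDerivAt t
      ((hdiff2 _ (hγ t ht)).comp_hasDerivAt t (hγ' t)))
    hHess
  simp only [γ, Function.comp_apply, one_smul, zero_smul, add_zero, add_sub_cancel,
    Pi.sub_apply] at htaylor
  linarith

/-- Quadratic upper bound on the evolution of an unknown function (Lemma 2). -/
theorem quadratic_upper_bound {n : ℕ} (uL uU : Fin n → ℝ)
    (f : (Fin n → ℝ) → ℝ) (f' : (Fin n → ℝ) → (Fin n → ℝ) →L[ℝ] ℝ)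
    (f'' : (Fin n → ℝ) → (Fin n → ℝ) →L[ℝ] (Fin n → ℝ) →L[ℝ] ℝ)
    (M : Fin n → Fin n → ℝ) (hM : ∀ i j, 0 < M i j)
    (hdiff : ∀ u : Fin n → ℝ, (∀ i, uL i ≤ u i ∧ u i ≤ uU i) → HasFDerivAt f (f' u) u)
    (hdiff2 : ∀ u : Fin n → ℝ, (∀ i, uL i ≤ u i ∧ u i ≤ uU i) → HasFDerivAt f' (f'' u) u)
    (hbound : ∀ u : Fin n → ℝ, (∀ i, uL i ≤ u i ∧ u i ≤ uU i) →
      ∀ i j, |f'' u (Pi.single i 1) (Pi.single j 1)| < M i j)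
    (u v : Fin n → ℝ)
    (hu : ∀ i, uL i ≤ u i ∧ u i ≤ uU i) (hv : ∀ i, uL i ≤ v i ∧ v i ≤ uU i) :
    f v - f u ≤ f' u (v - u) + (1/2) * ∑ i, (∑ j, M i j) * (v i - u i)^2 :=
  quadratic_upper_bound_general uL uU f f' f'' M hdiff hdiff2 hbound u v hu hv
end

section
/- Let g₁,…,g_m : ℝⁿ → ℝ be continuously differentiable functions with strict Lipschitz bounds |∂gⱼ/∂uᵢ(u)| < κⱼᵢ on a box I, and suppose g_j(u_k) < 0 for all j at a point u_k ∈ I. Let u*_{k+1} ∈ I with u*_{k+1} ≠ u_k, and set u_{k+1} = u_k + K_k(u*_{k+1} − u_k) with 0 ≤ K_k ≤ min_j [ −g_j(u_k) / Σᵢ κⱼᵢ |u*_{k+1,i} − u_{k,i}| ]. Then g_j(u_{k+1}) < 0 for all j (with equality u_{k+1} = u_k when K_k = 0, in which case the constraints stay at their previous strictly negative values). -/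
/-! By the mean value theorem on the segment from `uk` to `uk + K • (ustar - uk)`, which stays in
the box, `g j` increases by a derivative of `g j` applied to `K • (ustar - uk)`. The strict
coordinatewise bounds put this strictly below `K * ∑ i, κ j i * |ustar i - uk i| ≤ -g j uk`. -/

theorem ContinuousLinearMap.apply_lt_sum_mul_abs {ι : Type*} [Fintype ι] [DecidableEq ι]
    (L : (ι → ℝ) →L[ℝ] ℝ) {κ : ι → ℝ} (hL : ∀ i, |L (Pi.single i 1)| < κ i) {v : ι → ℝ}
    (hv : v ≠ 0) : L v < ∑ i, κ i * |v i| := by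
  obtain ⟨i₀, hi₀⟩ : ∃ i, v i ≠ 0 := Function.ne_iff.mp hv
  have hterm : ∀ i, v i * L (Pi.single i 1) ≤ |v i| * |L (Pi.single i 1)| :=
    fun i => (le_abs_self _).trans_eq (abs_mul _ _)
  calc L v = ∑ i, v i * L (Pi.single i 1) := by
        conv_lhs => rw [pi_eq_sum_univ' v]
        simp only [map_sum, map_smul, smul_eq_mul]
    _ < ∑ i, κ i * |v i| := by
      refine Finset.sum_lt_sum (fun i _ => ?_) ⟨i₀, Finset.mem_univ _, ?_⟩
      · calc _ ≤ |v i| * |L (Pi.single i 1)| := hterm i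
          _ ≤ |v i| * κ i := mul_le_mul_of_nonneg_left (hL i).le (abs_nonneg _)
          _ = κ i * |v i| := mul_comm _ _
      · calc _ ≤ |v i₀| * |L (Pi.single i₀ 1)| := hterm i₀
          _ < |v i₀| * κ i₀ := mul_lt_mul_of_pos_left (hL i₀) (abs_pos.2 hi₀)
          _ = κ i₀ * |v i₀| := mul_comm _ _

theorem Convex.image_sub_lt_sum_mul_abs_sub {ι : Type*} [Fintype ι] [DecidableEq ι]
    {s : Set (ι → ℝ)} (hs : Convex ℝ s) {f : (ι → ℝ) → ℝ} {f' : (ι → ℝ) → (ι → ℝ) →L[ℝ] ℝ}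
    (hf : ∀ x ∈ s, HasFDerivWithinAt f (f' x) s x) {κ : ι → ℝ}
    (hbound : ∀ x ∈ s, ∀ i, |f' x (Pi.single i 1)| < κ i) {x y : ι → ℝ} (hx : x ∈ s)
    (hy : y ∈ s) (hxy : x ≠ y) : f y - f x < ∑ i, κ i * |y i - x i| := by
  obtain ⟨z, hz, hfz⟩ := domain_mvt hf hs hx hy
  rw [hfz]
  exact (f' z).apply_lt_sum_mul_abs (hbound z (hs.segment_subset hx hy hz))
    (sub_ne_zero.2 hxy.symm)

theorem adaptive_filter_feasibility_general {n m : ℕ} (uL uU : Fin n → ℝ)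
    (g : Fin m → (Fin n → ℝ) → ℝ)
    (g' : Fin m → (Fin n → ℝ) → (Fin n → ℝ) →L[ℝ] ℝ)
    (κ : Fin m → Fin n → ℝ)
    (hdiff : ∀ j, ∀ u : Fin n → ℝ, (∀ i, uL i ≤ u i ∧ u i ≤ uU i) →
      HasFDerivAt (g j) (g' j u) u)
    (hbound : ∀ j, ∀ u : Fin n → ℝ, (∀ i, uL i ≤ u i ∧ u i ≤ uU i) →
      ∀ i, |g' j u (Pi.single i 1)| < κ j i)
    (uk ustar : Fin n → ℝ)
    (huk : ∀ i, uL i ≤ uk i ∧ uk i ≤ uU i)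
    (hustar : ∀ i, uL i ≤ ustar i ∧ ustar i ≤ uU i)
    (hfeas : ∀ j, g j uk < 0)
    (K : ℝ) (hK0 : 0 ≤ K) (hK1 : K ≤ 1)
    (hKgain : ∀ j, K ≤ (-(g j uk)) / (∑ i, κ j i * |ustar i - uk i|)) :
    ∀ j, g j (uk + K • (ustar - uk)) < 0 := by
  intro j
  have mem_box : ∀ u : Fin n → ℝ, u ∈ Set.Icc uL uU ↔ ∀ i, uL i ≤ u i ∧ u i ≤ uU i := fun u => by
    simp only [Set.mem_Icc, Pi.le_def, forall_and]
  set S := ∑ i, κ j i * |ustar i - uk i|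
  have hKS : K * S ≤ -g j uk := by
    rcases le_or_gt S 0 with hS | hS
    · linarith [mul_nonpos_of_nonneg_of_nonpos hK0 hS, hfeas j]
    · exact (le_div_iff₀ hS).1 (hKgain j)
  by_cases hstay : uk = uk + K • (ustar - uk)
  · rw [← hstay]
    exact hfeas j
  have hnext : uk + K • (ustar - uk) ∈ Set.Icc uL uU :=
    (convex_Icc uL uU).add_smul_sub_mem ((mem_box uk).2 huk) ((mem_box ustar).2 hustar) ⟨hK0, hK1⟩
  have hstep := (convex_Icc uL uU).image_sub_lt_sum_mul_abs_sub
    (fun u hu => (hdiff j u ((mem_box u).1 hu)).hasFDerivWithinAt)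
    (fun u hu => hbound j u ((mem_box u).1 hu)) ((mem_box uk).2 huk) hnext hstay
  have hsum : ∑ i, κ j i * |(uk + K • (ustar - uk)) i - uk i| = K * S := by
    simp only [S, Finset.mul_sum, Pi.add_apply, Pi.smul_apply, Pi.sub_apply, smul_eq_mul,
      add_sub_cancel_left, abs_mul, abs_of_nonneg hK0]
    exact Finset.sum_congr rfl fun i _ => by ring
  linarith

/-- Sufficient condition for feasibility via the adaptive input filter (Theorem 2). -/
theorem adaptive_filter_feasibility {n m : ℕ} (uL uU : Fin n → ℝ)
    (g : Fin m → (Fin n → ℝ) → ℝ)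
    (g' : Fin m → (Fin n → ℝ) → (Fin n → ℝ) →L[ℝ] ℝ)
    (κ : Fin m → Fin n → ℝ) (hκ : ∀ j i, 0 < κ j i)
    (hdiff : ∀ j, ∀ u : Fin n → ℝ, (∀ i, uL i ≤ u i ∧ u i ≤ uU i) →
      HasFDerivAt (g j) (g' j u) u)
    (hbound : ∀ j, ∀ u : Fin n → ℝ, (∀ i, uL i ≤ u i ∧ u i ≤ uU i) →
      ∀ i, |g' j u (Pi.single i 1)| < κ j i)
    (uk ustar : Fin n → ℝ)
    (huk : ∀ i, uL i ≤ uk i ∧ uk i ≤ uU i)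
    (hustar : ∀ i, uL i ≤ ustar i ∧ ustar i ≤ uU i)
    (hne : ustar ≠ uk)
    (hfeas : ∀ j, g j uk < 0)
    (K : ℝ) (hK0 : 0 ≤ K) (hK1 : K ≤ 1)
    (hKgain : ∀ j, K ≤ (-(g j uk)) / (∑ i, κ j i * |ustar i - uk i|)) :
    ∀ j, g j (uk + K • (ustar - uk)) < 0 :=
  adaptive_filter_feasibility_general uL uU g g' κ hdiff hbound uk ustar huk hustar hfeas K hK0 hK1
    hKgain
end

section
/- Let g : ℝⁿ → ℝ have nonstrict Lipschitz constants κ̃ᵢ and strict Lipschitz constants κᵢ on a box I with κ̃ᵢ ≤ γ κᵢ for some γ ∈ (0,1). Suppose the step u_{k+1} − u_k satisfies Σᵢ κᵢ |u_{k+1,i} − u_{k,i}| ≤ −g(u_k) with g(u_k) < 0. Then g(u_{k+1}) ≤ (1 − γ) g(u_k), i.e., −g(u_{k+1}) ≥ (1 − γ)(−g(u_k)). -/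
theorem Finset.sum_mul_le_mul_sum_of_le_mul {ι : Type*} (s : Finset ι) {a b d : ι → ℝ} {c : ℝ}
    (hab : ∀ i ∈ s, a i ≤ c * b i) (hd : ∀ i ∈ s, 0 ≤ d i) :
    ∑ i ∈ s, a i * d i ≤ c * ∑ i ∈ s, b i * d i := by
  rw [Finset.mul_sum]
  refine Finset.sum_le_sum fun i hi => ?_
  rw [← mul_assoc]
  exact mul_le_mul_of_nonneg_right (hab i hi) (hd i hi)

theorem constraint_shrink_factor_general {n : ℕ} (uL uU : Fin n → ℝ)
    (g : (Fin n → ℝ) → ℝ)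
    (κt κ : Fin n → ℝ) (γ : ℝ) (hγ0 : 0 < γ)
    (hκt : ∀ i, κt i ≤ γ * κ i)
    (hLip : ∀ u v : Fin n → ℝ, (∀ i, uL i ≤ u i ∧ u i ≤ uU i) →
      (∀ i, uL i ≤ v i ∧ v i ≤ uU i) →
      g v - g u ≤ ∑ i, κt i * |v i - u i|)
    (uk uk1 : Fin n → ℝ)
    (huk : ∀ i, uL i ≤ uk i ∧ uk i ≤ uU i)
    (huk1 : ∀ i, uL i ≤ uk1 i ∧ uk1 i ≤ uU i)
    (hstep : ∑ i, κ i * |uk1 i - uk i| ≤ -(g uk)) :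
    g uk1 ≤ (1 - γ) * g uk := by
  calc g uk1 ≤ g uk + ∑ i, κt i * |uk1 i - uk i| := by linarith [hLip uk uk1 huk huk1]
    _ ≤ g uk + γ * ∑ i, κ i * |uk1 i - uk i| := by
      gcongr
      exact Finset.sum_mul_le_mul_sum_of_le_mul _ (fun i _ => hκt i) (fun i _ => abs_nonneg _)
    _ ≤ g uk + γ * -g uk := by gcongr
    _ = (1 - γ) * g uk := by ring

/-- A constraint value can shrink toward 0 by at most the factor (1 − γ) per iteration. -/
theorem constraint_shrink_factor {n : ℕ} (uL uU : Fin n → ℝ)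
    (g : (Fin n → ℝ) → ℝ)
    (κt κ : Fin n → ℝ) (γ : ℝ) (hγ0 : 0 < γ) (hγ1 : γ < 1)
    (hκt : ∀ i, κt i ≤ γ * κ i)
    (hLip : ∀ u v : Fin n → ℝ, (∀ i, uL i ≤ u i ∧ u i ≤ uU i) →
      (∀ i, uL i ≤ v i ∧ v i ≤ uU i) →
      g v - g u ≤ ∑ i, κt i * |v i - u i|)
    (uk uk1 : Fin n → ℝ)
    (huk : ∀ i, uL i ≤ uk i ∧ uk i ≤ uU i)
    (huk1 : ∀ i, uL i ≤ uk1 i ∧ uk1 i ≤ uU i)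
    (hgneg : g uk < 0)
    (hstep : ∑ i, κ i * |uk1 i - uk i| ≤ -(g uk)) :
    g uk1 ≤ (1 - γ) * g uk :=
  constraint_shrink_factor_general uL uU g κt κ γ hγ0 hκt hLip uk uk1 huk huk1 hstep
end

section
/- Let g : ℝⁿ → ℝ satisfy the quadratic upper bound g(v) − g(u) ≤ ∇g(u)ᵀ(v − u) + ½(v − u)ᵀ Q̄ (v − u) for all u, v in the box I with Q̄ ≻ 0, and suppose ∇g(u_k)ᵀ(u*_{k+1} − u_k) ≤ −δ with δ > 0 and u_k, u*_{k+1} ∈ I. Define K_ε = 2δ / ((uᵁ − uᴸ)ᵀ Q̄ (uᵁ − uᴸ)). Then K_ε ≤ −2 ∇g(u_k)ᵀ(u*_{k+1} − u_k) / ((u*_{k+1} − u_k)ᵀ Q̄ (u*_{k+1} − u_k)), and consequently any filter gain K with 0 < K < K_ε yields g(u_k + K(u*_{k+1} − u_k)) < g(u_k). -/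
/-!
Along the direction `d = u* - u` the quadratic upper bound gives
`g (u + K d) - g u ≤ K s + K² q / 2` with slope `s = ∇g(u)ᵀ d ≤ -δ` and curvature `q = dᵀ Q̄ d`,
which is negative as soon as `K q < -2 s`. Both points lie in the box, so `|dᵢ| ≤ uᵁᵢ - uᴸᵢ` and
`q` is at most the curvature of the box diagonal; hence `K_ε ≤ -2 s / q`, and the segment
`u + K d`, `0 < K ≤ 1`, stays in the (convex) box where the bound applies.
-/

open Finset

section DiagonalQuadraticForm

variable {ι : Type*} [Fintype ι] {Q : ι → ℝ}

theorem sum_mul_sq_pos_of_ne_zero (hQ : ∀ i, 0 < Q i) {w : ι → ℝ} (hw : w ≠ 0) :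
    0 < ∑ i, Q i * w i ^ 2 := by
  obtain ⟨j, hj⟩ := Function.ne_iff.mp hw
  exact sum_pos' (fun i _ => mul_nonneg (hQ i).le (sq_nonneg _))
    ⟨j, mem_univ j, mul_pos (hQ j) (sq_pos_of_ne_zero hj)⟩

theorem sum_mul_sq_le_of_abs_le (hQ : ∀ i, 0 ≤ Q i) {w d : ι → ℝ} (h : ∀ i, |w i| ≤ d i) :
    ∑ i, Q i * w i ^ 2 ≤ ∑ i, Q i * d i ^ 2 :=
  sum_le_sum fun i _ =>
    mul_le_mul_of_nonneg_left (sq_le_sq.mpr ((h i).trans (le_abs_self _))) (hQ i)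

theorem sum_mul_sq_sub_le_of_mem_Icc (hQ : ∀ i, 0 ≤ Q i) {a b u v : ι → ℝ}
    (hu : u ∈ Set.Icc a b) (hv : v ∈ Set.Icc a b) :
    ∑ i, Q i * (v i - u i) ^ 2 ≤ ∑ i, Q i * (b i - a i) ^ 2 :=
  sum_mul_sq_le_of_abs_le hQ fun i => by
    rw [← Real.dist_eq]
    exact Real.dist_le_of_mem_Icc ⟨hv.1 i, hv.2 i⟩ ⟨hu.1 i, hu.2 i⟩

theorem apply_add_smul_lt_of_quadratic_bound {g : (ι → ℝ) → ℝ} {G u d : ι → ℝ} {K : ℝ}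
    (hbound : g (u + K • d) - g u ≤
      (∑ i, G i * ((u + K • d) i - u i)) + (1/2) * ∑ i, Q i * ((u + K • d) i - u i) ^ 2)
    (hK : 0 < K) (hgain : K * ∑ i, Q i * d i ^ 2 < -2 * ∑ i, G i * d i) :
    g (u + K • d) < g u := by
  have hstep : ∀ i, (u + K • d) i - u i = K * d i := fun i => by simp
  have hslope : ∑ i, G i * (K * d i) = K * ∑ i, G i * d i := by
    rw [mul_sum]; exact sum_congr rfl fun i _ => by ring
  have hcurv : ∑ i, Q i * (K * d i) ^ 2 = K ^ 2 * ∑ i, Q i * d i ^ 2 := by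
    rw [mul_sum]; exact sum_congr rfl fun i _ => by ring
  simp only [hstep, hslope, hcurv] at hbound
  nlinarith

end DiagonalQuadraticForm

/-- An algorithm-independent minimal descent gain `K_ε` for an ε-active constraint. -/
theorem minimal_descent_gain {n : ℕ} (uL uU : Fin n → ℝ)
    (g : (Fin n → ℝ) → ℝ)
    (Gg : (Fin n → ℝ) → (Fin n → ℝ))   -- gradient of g
    (Qd : Fin n → ℝ) (hQd : ∀ i, 0 < Qd i)   -- diagonal Q̄ ≻ 0
    (hquad : ∀ u v : Fin n → ℝ, (∀ i, uL i ≤ u i ∧ u i ≤ uU i) →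
      (∀ i, uL i ≤ v i ∧ v i ≤ uU i) →
      g v - g u ≤ (∑ i, Gg u i * (v i - u i)) + (1/2) * ∑ i, Qd i * (v i - u i)^2)
    (uk ustar : Fin n → ℝ)
    (huk : ∀ i, uL i ≤ uk i ∧ uk i ≤ uU i)
    (hustar : ∀ i, uL i ≤ ustar i ∧ ustar i ≤ uU i)
    (δ : ℝ) (hδ : 0 < δ)
    (hdesc : ∑ i, Gg uk i * (ustar i - uk i) ≤ -δ)
    (Keps : ℝ) (hKeps : Keps = 2 * δ / (∑ i, Qd i * (uU i - uL i)^2)) :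
    Keps ≤ -2 * (∑ i, Gg uk i * (ustar i - uk i)) /
        (∑ i, Qd i * (ustar i - uk i)^2) ∧
    ∀ K : ℝ, 0 < K → K < Keps → K ≤ 1 →
      g (uk + K • (ustar - uk)) < g uk := by
  have huk_mem : uk ∈ Set.Icc uL uU := ⟨fun i => (huk i).1, fun i => (huk i).2⟩
  have hustar_mem : ustar ∈ Set.Icc uL uU := ⟨fun i => (hustar i).1, fun i => (hustar i).2⟩
  have hdir : ustar - uk ≠ 0 := by
    intro h
    have hslope : ∑ i, Gg uk i * (ustar i - uk i) = 0 :=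
      sum_eq_zero fun i _ => by rw [← Pi.sub_apply, h, Pi.zero_apply, mul_zero]
    linarith
  have hcurv_pos := sum_mul_sq_pos_of_ne_zero hQd hdir
  have hcurv_le := sum_mul_sq_sub_le_of_mem_Icc (fun i => (hQd i).le) huk_mem hustar_mem
  have hgain : Keps ≤ -2 * (∑ i, Gg uk i * (ustar i - uk i)) /
      (∑ i, Qd i * (ustar i - uk i)^2) := by
    rw [hKeps]
    exact div_le_div₀ (by linarith) (by linarith) hcurv_pos hcurv_le
  refine ⟨hgain, fun K hK hKKeps hK1 => ?_⟩
  have hv := (convex_Icc uL uU).add_smul_sub_mem huk_mem hustar_mem ⟨hK.le, hK1⟩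
  exact apply_add_smul_lt_of_quadratic_bound (hquad _ _ huk fun i => ⟨hv.1 i, hv.2 i⟩) hK
    ((lt_div_iff₀ hcurv_pos).mp (hKKeps.trans_le hgain))
end

section
/- Let φ : ℝⁿ → ℝ satisfy the quadratic upper bound φ(v) − φ(u) ≤ ∇φ(u)ᵀ(v − u) + ½(v − u)ᵀ Q̄ (v − u) with Q̄ ≻ 0 on a box I. Suppose at iteration k: ∇φ(u_k)ᵀ(u*_{k+1} − u_k) ≤ −δ_φ with δ_φ > 0, and the gain satisfies 0 < K_min ≤ K_k ≤ −2∇φ(u_k)ᵀ(u*_{k+1} − u_k)/((u*_{k+1} − u_k)ᵀ Q̄ (u*_{k+1} − u_k)) − K_min, with u_k, u*_{k+1} ∈ I. Then φ(u_{k+1}) − φ(u_k) ≤ −K_min δ_φ + (K_min²/2)(uᵁ − uᴸ)ᵀ Q̄ (uᵁ − uᴸ), and this bound is strictly negative whenever K_min < 2δ_φ/((uᵁ − uᴸ)ᵀ Q̄ (uᵁ − uᴸ)). -/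
/-!
Along the ray `u_k + K (u* - u_k)` the quadratic upper bound turns the cost change into
`q(K) = K b + K² c / 2`, with `b = ∇φ(u_k)ᵀ(u* - u_k)` and `c = (u* - u_k)ᵀ Q̄ (u* - u_k)`.
The parabola `q` is symmetric about `-b / c`, so on `[K_min, -2b/c - K_min]` it is largest at
the endpoints, where it equals `q(K_min) ≤ -K_min δ_φ + K_min² c / 2`; finally `c` is at most
the same quadratic form evaluated on the diagonal `uᵁ - uᴸ` of the box.
-/

open Finset

section Parabola

theorem mul_add_sq_div_two_mul_le {a x b c : ℝ} (hax : a ≤ x) (hx : (x + a) * c ≤ -2 * b) :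
    x * b + x ^ 2 / 2 * c ≤ a * b + a ^ 2 / 2 * c := by
  have hfactor : x * b + x ^ 2 / 2 * c - (a * b + a ^ 2 / 2 * c)
      = (x - a) * (b + (x + a) * c / 2) := by ring
  nlinarith [mul_nonpos_of_nonneg_of_nonpos (sub_nonneg.mpr hax)
    (by linarith : b + (x + a) * c / 2 ≤ 0)]

/-- Since `d / 0 = 0`, the positivity of `y` excludes `c = 0`. -/
theorem mul_le_of_le_div_of_nonneg {y c d : ℝ} (hc : 0 ≤ c) (hy : 0 < y) (h : y ≤ d / c) :
    y * c ≤ d := by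
  rcases hc.eq_or_lt with rfl | hc
  · rw [div_zero] at h
    linarith
  · exact (le_div_iff₀ hc).mp h

theorem neg_mul_add_sq_div_two_mul_neg {a δ D : ℝ} (hD : 0 ≤ D) (ha : 0 < a)
    (h : a < 2 * δ / D) : -(a * δ) + a ^ 2 / 2 * D < 0 := by
  rcases hD.eq_or_lt with rfl | hD
  · rw [div_zero] at h
    linarith
  · nlinarith [(lt_div_iff₀ hD).mp h]

end Parabola

section Box

variable {ι : Type*}

theorem forall_le_and_le_iff_mem_Icc {l u v : ι → ℝ} :
    (∀ i, l i ≤ v i ∧ v i ≤ u i) ↔ v ∈ Set.Icc l u := by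
  simp only [Set.mem_Icc, Pi.le_def, forall_and]

variable [Fintype ι]

theorem sum_mul_add_smul_sub_sub (w x y : ι → ℝ) (t : ℝ) :
    ∑ i, w i * ((x + t • (y - x)) i - x i) = t * ∑ i, w i * (y i - x i) := by
  rw [mul_sum]
  refine sum_congr rfl fun i _ => ?_
  simp only [Pi.add_apply, Pi.smul_apply, Pi.sub_apply, smul_eq_mul]
  ring

theorem sum_mul_add_smul_sub_sub_sq (w x y : ι → ℝ) (t : ℝ) :
    ∑ i, w i * ((x + t • (y - x)) i - x i) ^ 2 = t ^ 2 * ∑ i, w i * (y i - x i) ^ 2 := by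
  rw [mul_sum]
  refine sum_congr rfl fun i _ => ?_
  simp only [Pi.add_apply, Pi.smul_apply, Pi.sub_apply, smul_eq_mul]
  ring

theorem sum_mul_sub_sq_le_of_mem_Icc {w l u x y : ι → ℝ} (hw : ∀ i, 0 ≤ w i)
    (hx : x ∈ Set.Icc l u) (hy : y ∈ Set.Icc l u) :
    ∑ i, w i * (y i - x i) ^ 2 ≤ ∑ i, w i * (u i - l i) ^ 2 := by
  refine sum_le_sum fun i _ => mul_le_mul_of_nonneg_left ?_ (hw i)
  rw [← sq_abs (y i - x i)]
  have hyx := abs_sub_le_of_le_of_le (hy.1 i) (hy.2 i) (hx.1 i) (hx.2 i)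
  exact pow_le_pow_left₀ (abs_nonneg _) hyx 2

end Box

theorem minimal_cost_decrease_general {n : ℕ} (uL uU : Fin n → ℝ)
    (φ : (Fin n → ℝ) → ℝ)
    (Gφ : Fin n → ℝ)   -- Gφ = ∇φ(u_k)
    (Qd : Fin n → ℝ) (hQd : ∀ i, 0 < Qd i)   -- diagonal Q̄ ≻ 0
    (uk ustar : Fin n → ℝ)
    (huk : ∀ i, uL i ≤ uk i ∧ uk i ≤ uU i)
    (hustar : ∀ i, uL i ≤ ustar i ∧ ustar i ≤ uU i)
    (hquad : ∀ v : Fin n → ℝ, (∀ i, uL i ≤ v i ∧ v i ≤ uU i) →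
      φ v - φ uk ≤ (∑ i, Gφ i * (v i - uk i)) + (1/2) * ∑ i, Qd i * (v i - uk i)^2)
    (δφ : ℝ)
    (hdesc : ∑ i, Gφ i * (ustar i - uk i) ≤ -δφ)
    (K Kmin : ℝ) (hKmin : 0 < Kmin) (hKlb : Kmin ≤ K) (hK1 : K ≤ 1)
    (hKub : K ≤ -2 * (∑ i, Gφ i * (ustar i - uk i)) /
        (∑ i, Qd i * (ustar i - uk i)^2) - Kmin) :
    φ (uk + K • (ustar - uk)) - φ uk ≤
        -(Kmin * δφ) + (Kmin^2 / 2) * ∑ i, Qd i * (uU i - uL i)^2 ∧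
    (Kmin < 2 * δφ / (∑ i, Qd i * (uU i - uL i)^2) →
      -(Kmin * δφ) + (Kmin^2 / 2) * ∑ i, Qd i * (uU i - uL i)^2 < 0) := by
  set b := ∑ i, Gφ i * (ustar i - uk i)
  set c := ∑ i, Qd i * (ustar i - uk i) ^ 2
  set D := ∑ i, Qd i * (uU i - uL i) ^ 2
  have hQ : ∀ i, 0 ≤ Qd i := fun i => (hQd i).le
  rw [forall_le_and_le_iff_mem_Icc] at huk hustar
  have hc : 0 ≤ c := sum_nonneg fun i _ => mul_nonneg (hQ i) (sq_nonneg _)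
  have hcD : c ≤ D := sum_mul_sub_sq_le_of_mem_Icc hQ huk hustar
  have hstep : uk + K • (ustar - uk) ∈ Set.Icc uL uU :=
    (convex_Icc uL uU).add_smul_sub_mem huk hustar ⟨by linarith, hK1⟩
  have hcost := hquad _ (forall_le_and_le_iff_mem_Icc.mpr hstep)
  rw [sum_mul_add_smul_sub_sub, sum_mul_add_smul_sub_sub_sq] at hcost
  have hgain : (K + Kmin) * c ≤ -2 * b :=
    mul_le_of_le_div_of_nonneg hc (by linarith) (by linarith)
  refine ⟨?_, neg_mul_add_sq_div_two_mul_neg (hc.trans hcD) hKmin⟩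
  calc φ (uk + K • (ustar - uk)) - φ uk ≤ K * b + K ^ 2 / 2 * c := by linarith
    _ ≤ Kmin * b + Kmin ^ 2 / 2 * c := mul_add_sq_div_two_mul_le hKlb hgain
    _ ≤ -(Kmin * δφ) + Kmin ^ 2 / 2 * D := by
      gcongr
      rw [← mul_neg]
      exact mul_le_mul_of_nonneg_left hdesc hKmin.le

/-- Minimal cost decrease between iterations (Lemma 4). -/
theorem minimal_cost_decrease {n : ℕ} (uL uU : Fin n → ℝ)
    (φ : (Fin n → ℝ) → ℝ)
    (Gφ : Fin n → ℝ)   -- Gφ = ∇φ(u_k)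
    (Qd : Fin n → ℝ) (hQd : ∀ i, 0 < Qd i)   -- diagonal Q̄ ≻ 0
    (uk ustar : Fin n → ℝ)
    (huk : ∀ i, uL i ≤ uk i ∧ uk i ≤ uU i)
    (hustar : ∀ i, uL i ≤ ustar i ∧ ustar i ≤ uU i)
    (hquad : ∀ v : Fin n → ℝ, (∀ i, uL i ≤ v i ∧ v i ≤ uU i) →
      φ v - φ uk ≤ (∑ i, Gφ i * (v i - uk i)) + (1/2) * ∑ i, Qd i * (v i - uk i)^2)
    (δφ : ℝ) (hδφ : 0 < δφ)
    (hdesc : ∑ i, Gφ i * (ustar i - uk i) ≤ -δφ)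
    (K Kmin : ℝ) (hKmin : 0 < Kmin) (hKlb : Kmin ≤ K) (hK1 : K ≤ 1)
    (hKub : K ≤ -2 * (∑ i, Gφ i * (ustar i - uk i)) /
        (∑ i, Qd i * (ustar i - uk i)^2) - Kmin) :
    φ (uk + K • (ustar - uk)) - φ uk ≤
        -(Kmin * δφ) + (Kmin^2 / 2) * ∑ i, Qd i * (uU i - uL i)^2 ∧
    (Kmin < 2 * δφ / (∑ i, Qd i * (uU i - uL i)^2) →
      -(Kmin * δφ) + (Kmin^2 / 2) * ∑ i, Qd i * (uU i - uL i)^2 < 0) :=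
  minimal_cost_decrease_general uL uU φ Gφ Qd hQd uk ustar huk hustar hquad δφ hdesc K Kmin hKmin
    hKlb hK1 hKub
end
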